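/- Let Γ be a finite game and, for each player i, let C'_i ⊆ C_i be nonempty. Suppose that for every player i and every c_i ∈ C_i \ C'_i there exists σ_i^{c_i} ∈ Δ(C'_i) with U_i(c_{-i}, c_i) = U_i(c_{-i}, σ_i^{c_i}) for all c_{-i} ∈ C_{-i}. Define the deviation plan α_i by α_i*c_i = σ_i^{c_i} if c_i ∉ C'_i and α_i*c_i = δ_{c_i} if c_i ∈ C'_i. Then α = (α_i)_{i∈N} is a dual vector of Γ (indeed D(c,α) = 0 for all c), and C_i/α_i = {δ_{c_i} : c_i ∈ C'_i} for every player i; i.e., the game Γ' with strategy sets C'_i is a dual reduction of Γ. -/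

import Mathlib

open scoped BigOperators

section Prelim

variable {S : Type} [Fintype S] [DecidableEq S]

/-- `σ` is a mixed strategy (probability distribution) on the finite set `S`. -/
def IsMixed (σ : S → ℝ) : Prop := (∀ s, 0 ≤ σ s) ∧ ∑ s, σ s = 1

/-- The Dirac measure `δ_s`. -/
def dirac (s : S) : S → ℝ := fun d => if d = s then 1 else 0

/-- `α_i * σ_i`, the image of the mixed strategy `σ` under the deviation plan `αᵢ`,
where `αᵢ c d` is the probability `αᵢ(d | c)`. -/
def devImage (αᵢ : S → S → ℝ) (σ : S → ℝ) : S → ℝ := fun d => ∑ c, σ c * αᵢ c d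

/-- `σ` is `αᵢ`-stationary: `αᵢ * σ = σ`. -/
def IsStationaryStrategy (αᵢ : S → S → ℝ) (σ : S → ℝ) : Prop := devImage αᵢ σ = σ

/-- A nonempty `B ⊆ S` is `αᵢ`-absorbing if `supp (αᵢ * c) ⊆ B` for all `c ∈ B`. -/
def IsAbsorbing (αᵢ : S → S → ℝ) (B : Finset S) : Prop :=
  B.Nonempty ∧ ∀ c ∈ B, ∀ d, 0 < αᵢ c d → d ∈ B

/-- A minimal absorbing set: an absorbing set containing no proper nonempty absorbing subset. -/
def IsMinimalAbsorbing (αᵢ : S → S → ℝ) (B : Finset S) : Prop :=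
  IsAbsorbing αᵢ B ∧ ∀ B' ⊆ B, IsAbsorbing αᵢ B' → B' = B

/-- `C_i/α_i`: the set of `αᵢ`-stationary mixed strategies whose support is contained
in some minimal `αᵢ`-absorbing set. -/
def ReducedSet (αᵢ : S → S → ℝ) : Set (S → ℝ) :=
  {σ | IsMixed σ ∧ IsStationaryStrategy αᵢ σ ∧
    ∃ B : Finset S, IsMinimalAbsorbing αᵢ B ∧ ∀ s, σ s ≠ 0 → s ∈ B}

end Prelim

section Games

variable {N : Type} [Fintype N] [DecidableEq N]
  {C : N → Type} [∀ i, Fintype (C i)] [∀ i, DecidableEq (C i)]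

/-- Marginal probability of the pure strategy `cᵢ` of player `i` under `μ`. -/
def marginal (μ : (∀ j, C j) → ℝ) (i : N) (cᵢ : C i) : ℝ :=
  ∑ c : ∀ j, C j, if c i = cᵢ then μ c else 0

/-- The incentive sum `∑_{c_{-i}} μ(c_{-i},cᵢ)[U_i(c_{-i},dᵢ) − U_i(c_{-i},cᵢ)]`. -/
def incentiveSum (U : ∀ i : N, (∀ j, C j) → ℝ) (μ : (∀ j, C j) → ℝ) (i : N) (cᵢ dᵢ : C i) : ℝ :=
  ∑ c : ∀ j, C j, if c i = cᵢ then μ c * (U i (Function.update c i dᵢ) - U i c) else 0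

/-- Correlated equilibrium. -/
def IsCorrelatedEq (U : ∀ i : N, (∀ j, C j) → ℝ) (μ : (∀ j, C j) → ℝ) : Prop :=
  (∀ c, 0 ≤ μ c) ∧ (∑ c : ∀ j, C j, μ c) = 1 ∧
    ∀ (i : N) (cᵢ dᵢ : C i), incentiveSum U μ i cᵢ dᵢ ≤ 0

/-- Multilinear extension: payoff of player `i` under the mixed strategy profile `σ`. -/
def mixedPayoff (U : ∀ i : N, (∀ j, C j) → ℝ) (σ : ∀ j, C j → ℝ) (i : N) : ℝ :=
  ∑ c : ∀ j, C j, (∏ j, σ j (c j)) * U i c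

/-- Nash equilibrium. -/
def IsNash (U : ∀ i : N, (∀ j, C j) → ℝ) (σ : ∀ j, C j → ℝ) : Prop :=
  (∀ i, IsMixed (σ i)) ∧
  ∀ (i : N) (dᵢ : C i),
    mixedPayoff U (Function.update σ i (dirac dᵢ)) i ≤ mixedPayoff U σ i

/-- `D(c, α) = ∑_i [U_i(c_{-i}, α_i * c_i) − U_i(c)]`. -/
def devGain (U : ∀ i : N, (∀ j, C j) → ℝ) (α : ∀ i, C i → C i → ℝ) (c : ∀ j, C j) : ℝ :=
  ∑ i, ((∑ dᵢ, α i (c i) dᵢ * U i (Function.update c i dᵢ)) - U i c)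

/-- A dual vector: a profile of deviation plans with `D(c,α) ≥ 0` for all `c`. -/
def IsDualVector (U : ∀ i : N, (∀ j, C j) → ℝ) (α : ∀ i, C i → C i → ℝ) : Prop :=
  (∀ (i : N) (cᵢ : C i), IsMixed (α i cᵢ)) ∧ ∀ c, 0 ≤ devGain U α c

/-- A strong dual vector: `D(c,α) > 0` whenever `c` has probability zero in all
correlated equilibria. -/
def IsStrong (U : ∀ i : N, (∀ j, C j) → ℝ) (α : ∀ i, C i → C i → ℝ) : Prop :=
  ∀ c : ∀ j, C j, (∀ μ, IsCorrelatedEq U μ → μ c = 0) → 0 < devGain U α c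

/-- A full dual vector: `α_i(dᵢ|cᵢ) > 0` whenever `β_i(dᵢ|cᵢ) > 0` for some dual vector `β`. -/
def IsFull (U : ∀ i : N, (∀ j, C j) → ℝ) (α : ∀ i, C i → C i → ℝ) : Prop :=
  ∀ (i : N) (cᵢ dᵢ : C i),
    (∃ β : ∀ i, C i → C i → ℝ, IsDualVector U β ∧ 0 < β i cᵢ dᵢ) → 0 < α i cᵢ dᵢ

end Games

/-! Every strategy off `C' i` is sent by `α i` into `C' i`, where `α i` is the identity, so the
minimal absorbing sets are exactly the singletons of `C' i` and `C_i/α_i` consists of their Dirac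
measures. Payoff equivalence of each omitted strategy with its replacement makes every summand
of `D(c, α)` vanish. -/

section Reduction

variable {S : Type}

theorem IsMixed.exists_pos [Fintype S] {σ : S → ℝ} (hσ : IsMixed σ) : ∃ s, 0 < σ s := by
  by_contra! h
  have hzero : ∀ s, σ s = 0 := fun s => le_antisymm (h s) (hσ.1 s)
  simpa [hzero] using hσ.2

variable [DecidableEq S] {αᵢ : S → S → ℝ}

theorem isAbsorbing_singleton (s : S) (hfix : αᵢ s = dirac s) : IsAbsorbing αᵢ {s} := by
  refine ⟨Finset.singleton_nonempty s, fun c hc d hd => ?_⟩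
  rw [Finset.mem_singleton] at hc ⊢
  subst hc
  by_contra hne
  simp [hfix, dirac, hne] at hd

theorem isMinimalAbsorbing_singleton (s : S) (hfix : αᵢ s = dirac s) :
    IsMinimalAbsorbing αᵢ {s} :=
  ⟨isAbsorbing_singleton s hfix, fun _ hB' hB'abs =>
    Finset.Subset.antisymm hB' (Finset.singleton_subset_iff.mpr (by
      obtain ⟨b, hb⟩ := hB'abs.1
      rwa [Finset.mem_singleton.mp (hB' hb)] at hb))⟩

theorem IsMinimalAbsorbing.eq_singleton {B : Finset S} {s : S} (hB : IsMinimalAbsorbing αᵢ B)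
    (hs : s ∈ B) (hfix : αᵢ s = dirac s) : B = {s} :=
  (hB.2 {s} (Finset.singleton_subset_iff.mpr hs) (isAbsorbing_singleton s hfix)).symm

variable [Fintype S]

theorem isMixed_dirac (s : S) : IsMixed (dirac s) :=
  ⟨fun d => by unfold dirac; split_ifs <;> norm_num, by simp [dirac]⟩

theorem sum_dirac_mul (s : S) (f : S → ℝ) : ∑ d, dirac s d * f d = f s := by
  simp [dirac]

theorem IsMixed.eq_dirac {σ : S → ℝ} {s : S} (hσ : IsMixed σ) (hsupp : ∀ t, σ t ≠ 0 → t = s) :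
    σ = dirac s := by
  have hzero : ∀ t, t ≠ s → σ t = 0 := fun t ht => by_contra fun h => ht (hsupp t h)
  have hs : σ s = 1 := by
    rw [← hσ.2, Finset.sum_eq_single s (fun t _ ht => hzero t ht) (by simp)]
  funext t
  by_cases ht : t = s
  · simp [dirac, ht, hs]
  · simp [dirac, ht, hzero t ht]

theorem dirac_mem_reducedSet (s : S) (hfix : αᵢ s = dirac s) : dirac s ∈ ReducedSet αᵢ := by
  refine ⟨isMixed_dirac s, ?_, {s}, isMinimalAbsorbing_singleton s hfix, fun t ht => ?_⟩
  · funext d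
    exact (sum_dirac_mul s _).trans (congrFun hfix d)
  · by_contra h
    simp [dirac, Finset.mem_singleton.not.mp h] at ht

theorem reducedSet_eq_diracs (K : Finset S) (hfix : ∀ s ∈ K, αᵢ s = dirac s)
    (hreach : ∀ s ∉ K, ∃ d ∈ K, 0 < αᵢ s d) :
    ReducedSet αᵢ = {σ | ∃ s ∈ K, σ = dirac s} := by
  ext σ
  constructor
  · rintro ⟨hσ, -, B, hB, hsupp⟩
    obtain ⟨s, hsB, hsK⟩ : ∃ s ∈ B, s ∈ K := by
      obtain ⟨b, hb⟩ := hB.1.1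
      by_cases hbK : b ∈ K
      · exact ⟨b, hb, hbK⟩
      · obtain ⟨d, hdK, hd⟩ := hreach b hbK
        exact ⟨d, hB.1.2 b hb d hd, hdK⟩
    have hBs := hB.eq_singleton hsB (hfix s hsK)
    exact ⟨s, hsK, hσ.eq_dirac fun t ht => Finset.mem_singleton.mp (hBs ▸ hsupp t ht)⟩
  · rintro ⟨s, hsK, rfl⟩
    exact dirac_mem_reducedSet s (hfix s hsK)

end Reduction

theorem redundant_elimination_is_dual_reduction_general
    {N : Type} [Fintype N] [DecidableEq N]
    {C : N → Type} [∀ i, Fintype (C i)] [∀ i, DecidableEq (C i)]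
    (U : ∀ i : N, (∀ j, C j) → ℝ)
    (C' : ∀ i, Finset (C i))
    (σrep : ∀ i, C i → C i → ℝ)
    (hmix : ∀ (i : N) (cᵢ : C i), cᵢ ∉ C' i →
      IsMixed (σrep i cᵢ) ∧ ∀ d, σrep i cᵢ d ≠ 0 → d ∈ C' i)
    (hpay : ∀ (i : N) (cᵢ : C i), cᵢ ∉ C' i → ∀ c : ∀ j, C j,
      ∑ d, σrep i cᵢ d * U i (Function.update c i d) = U i (Function.update c i cᵢ))
    (α : ∀ i, C i → C i → ℝ)
    (hαdef : ∀ (i : N) (cᵢ : C i), α i cᵢ = if cᵢ ∈ C' i then dirac cᵢ else σrep i cᵢ) :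
    IsDualVector U α ∧ (∀ c, devGain U α c = 0) ∧
      ∀ i : N, ReducedSet (α i) = {σ | ∃ cᵢ ∈ C' i, σ = dirac cᵢ} := by
  have hfix : ∀ i, ∀ s ∈ C' i, α i s = dirac s := fun i s hs => by simp [hαdef, hs]
  have hrep : ∀ i, ∀ s ∉ C' i, α i s = σrep i s := fun i s hs => by simp [hαdef, hs]
  have hαmixed : ∀ i s, IsMixed (α i s) := fun i s => by
    by_cases hs : s ∈ C' i
    · exact hfix i s hs ▸ isMixed_dirac s
    · exact hrep i s hs ▸ (hmix i s hs).1
  have hgain : ∀ c, devGain U α c = 0 := fun c => Finset.sum_eq_zero fun i _ => by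
    rw [sub_eq_zero]
    by_cases hc : c i ∈ C' i
    · rw [hfix i _ hc, sum_dirac_mul, Function.update_eq_self]
    · rw [hrep i _ hc, hpay i _ hc c, Function.update_eq_self]
  refine ⟨⟨hαmixed, fun c => (hgain c).ge⟩, hgain, fun i => reducedSet_eq_diracs _ (hfix i) ?_⟩
  intro s hs
  obtain ⟨d, hd⟩ := (hmix i s hs).1.exists_pos
  exact ⟨d, (hmix i s hs).2 d hd.ne', hrep i s hs ▸ hd⟩

/-- Omitting redundant strategies yields a dual reduction: if every omitted strategy `cᵢ` is
payoff-equivalent (for player `i`) to a mixed strategy `σrep i cᵢ` on the kept set `C' i`,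
then the deviation plan sending omitted strategies to their replacements and kept
strategies to themselves is a dual vector with `D(c,α) = 0` everywhere, and the reduced
strategy sets are exactly the Dirac measures on the kept strategies. -/
theorem redundant_elimination_is_dual_reduction
    {N : Type} [Fintype N] [DecidableEq N] [Nonempty N]
    {C : N → Type} [∀ i, Fintype (C i)] [∀ i, DecidableEq (C i)] [∀ i, Nonempty (C i)]
    (U : ∀ i : N, (∀ j, C j) → ℝ)
    (C' : ∀ i, Finset (C i)) (hC' : ∀ i, (C' i).Nonempty)
    (σrep : ∀ i, C i → C i → ℝ)
    (hmix : ∀ (i : N) (cᵢ : C i), cᵢ ∉ C' i →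
      IsMixed (σrep i cᵢ) ∧ ∀ d, σrep i cᵢ d ≠ 0 → d ∈ C' i)
    (hpay : ∀ (i : N) (cᵢ : C i), cᵢ ∉ C' i → ∀ c : ∀ j, C j,
      ∑ d, σrep i cᵢ d * U i (Function.update c i d) = U i (Function.update c i cᵢ))
    (α : ∀ i, C i → C i → ℝ)
    (hαdef : ∀ (i : N) (cᵢ : C i), α i cᵢ = if cᵢ ∈ C' i then dirac cᵢ else σrep i cᵢ) :
    IsDualVector U α ∧ (∀ c, devGain U α c = 0) ∧
      ∀ i : N, ReducedSet (α i) = {σ | ∃ cᵢ ∈ C' i, σ = dirac cᵢ} :=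
  redundant_elimination_is_dual_reduction_general U C' σrep hmix hpay α hαdef
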